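/- arXiv:1204.6560 — 8 statements merged into one kernel-verified Lean document; each statement's English description precedes it below -/
import Mathlib

section
/- For every prime p and every natural number k, the integer (k*p)! / (k! * (p!)^k) is a well-defined integer (i.e. k! * (p!)^k divides (k*p)!) and it is not divisible by p. -/
lemma aux_not_dvd_choose (p : ℕ) (hp : p.Prime) (i : ℕ) :
    ¬ p ∣ Nat.choose (i * p + p - 1) (p - 1) := by
  haveI : Fact p.Prime := ⟨hp⟩
  have hp1 : 1 ≤ p := hp.one_lt.le
  have hn : i * p + p - 1 = i * p + (p - 1) := by omega
  have hmod : (i * p + (p - 1)) % p = p - 1 := by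
    rw [Nat.mul_comm, Nat.mul_add_mod]
    exact Nat.mod_eq_of_lt (by omega)
  have hdiv : (i * p + (p - 1)) / p = i := by
    rw [Nat.mul_comm, Nat.mul_add_div hp.pos, Nat.div_eq_of_lt (by omega)]
    omega
  have hkm : (p - 1) % p = p - 1 := Nat.mod_eq_of_lt (by omega)
  have hkd : (p - 1) / p = 0 := Nat.div_eq_of_lt (by omega)
  have h := Choose.choose_modEq_choose_mod_mul_choose_div_nat
    (n := i * p + (p - 1)) (k := p - 1) (p := p)
  rw [hmod, hdiv, hkm, hkd, Nat.choose_self, Nat.choose_zero_right, mul_one] at h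
  rw [hn]
  intro hdvd
  have h1 : (i * p + (p - 1)).choose (p - 1) % p = 1 % p := h
  have h2 : (i * p + (p - 1)).choose (p - 1) % p = 0 := Nat.eq_zero_of_dvd_of_lt ((Nat.dvd_mod_iff dvd_rfl).mpr hdvd) (Nat.mod_lt _ hp.pos)
  have h3 : 1 % p = 1 := Nat.mod_eq_of_lt hp.one_lt
  omega

/-- For every prime `p` and natural `k`, `k! * (p!)^k` divides `(k*p)!`, and the
quotient `(k*p)! / (k! * (p!)^k)` is not divisible by `p`. -/
theorem multinomial_divides_and_prime_unit (p k : ℕ) (hp : p.Prime) :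
    (Nat.factorial k * Nat.factorial p ^ k) ∣ Nat.factorial (k * p) ∧
      ¬ p ∣ Nat.factorial (k * p) / (Nat.factorial k * Nat.factorial p ^ k) := by
  have hp0 : p ≠ 0 := hp.pos.ne'
  have hmul := Nat.uniformBell_mul_eq k hp0
  have hdvd : (Nat.factorial k * Nat.factorial p ^ k) ∣ Nat.factorial (k * p) := by
    exact ⟨Nat.uniformBell k p, by rw [← hmul]; ring⟩
  refine ⟨hdvd, ?_⟩
  have hq : Nat.factorial (k * p) / (Nat.factorial k * Nat.factorial p ^ k)
      = Nat.uniformBell k p := by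
    rw [Nat.uniformBell_eq_div k hp0, mul_comm (Nat.factorial p ^ k)]
  rw [hq, Nat.uniformBell_eq]
  intro hdvd'
  obtain ⟨i, _, hi⟩ := hp.prime.dvd_finset_prod_iff _ |>.mp hdvd'
  exact aux_not_dvd_choose p hp i hi
end

section
/- For every prime p and every natural number i, the integer (p^(i+1))! / (p! * ((p^i)!)^p) is a well-defined integer that is not divisible by p. -/
theorem pv_fact_pow_succ (p : ℕ) [Fact p.Prime] (i : ℕ) :
    padicValNat p (Nat.factorial (p ^ (i + 1))) =
      1 + p * padicValNat p (Nat.factorial (p ^ i)) := by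
  induction i with
  | zero =>
    simp only [pow_one, pow_zero, Nat.factorial_one]
    have := padicValNat_factorial_mul (p := p) 1
    simpa [Nat.mul_one] using this
  | succ i ih =>
    have h1 : p ^ (i + 2) = p * p ^ (i + 1) := by ring
    have h2 : p ^ (i + 1) = p * p ^ i := by ring
    have hrec : padicValNat p (Nat.factorial (p ^ (i + 1))) =
        padicValNat p (Nat.factorial (p ^ i)) + p ^ i := by
      rw [h2, padicValNat_factorial_mul]
    rw [h1, padicValNat_factorial_mul]
    conv_lhs => rw [ih]
    conv_rhs => rw [hrec]
    ring

/-- For every prime `p` and natural `i`, `p! * ((p^i)!)^p` divides `(p^(i+1))!`, and the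
quotient `(p^(i+1))! / (p! * ((p^i)!)^p)` is not divisible by `p`. -/
theorem iterated_divided_power_coeff_unit (p i : ℕ) (hp : p.Prime) :
    (Nat.factorial p * Nat.factorial (p ^ i) ^ p) ∣ Nat.factorial (p ^ (i + 1)) ∧
      ¬ p ∣ Nat.factorial (p ^ (i + 1)) / (Nat.factorial p * Nat.factorial (p ^ i) ^ p) := by
  haveI : Fact p.Prime := ⟨hp⟩
  have hn : p ^ i ≠ 0 := pow_ne_zero _ hp.pos.ne'
  have hbell := Nat.uniformBell_mul_eq p hn
  have heq : Nat.factorial (p ^ (i + 1)) =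
      Nat.uniformBell p (p ^ i) * (Nat.factorial p * Nat.factorial (p ^ i) ^ p) := by
    rw [pow_succ, Nat.mul_comm (p ^ i) p, ← hbell]
    ring
  have hdvd : (Nat.factorial p * Nat.factorial (p ^ i) ^ p) ∣ Nat.factorial (p ^ (i + 1)) :=
    ⟨Nat.uniformBell p (p ^ i), by rw [heq]; ring⟩
  refine ⟨hdvd, ?_⟩
  have hne : Nat.factorial p * Nat.factorial (p ^ i) ^ p ≠ 0 := by positivity
  have hq : Nat.factorial (p ^ (i + 1)) / (Nat.factorial p * Nat.factorial (p ^ i) ^ p)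
      = Nat.uniformBell p (p ^ i) := by
    rw [heq, Nat.mul_div_cancel _ (Nat.pos_of_ne_zero hne)]
  rw [hq]
  intro hdiv
  have hb0 : Nat.uniformBell p (p ^ i) ≠ 0 := by
    intro h
    rw [h, zero_mul] at heq
    exact Nat.factorial_ne_zero _ heq
  have hval : padicValNat p (Nat.uniformBell p (p ^ i)) = 0 := by
    have := pv_fact_pow_succ p i
    rw [heq, padicValNat.mul hb0 hne,
      padicValNat.mul (Nat.factorial_ne_zero p) (pow_ne_zero _ (Nat.factorial_ne_zero _)),
      padicValNat.pow] at this
    have hpf : padicValNat p (Nat.factorial p) = 1 := by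
      have := padicValNat_factorial_mul (p := p) 1
      simpa [Nat.mul_one] using this
    omega
  have := one_le_padicValNat_of_dvd hb0 hdiv
  omega
end

section
/- Let R be a commutative ring, M an R-module, and f_1, ..., f_r a regular sequence on M. Then for any positive integers n_1, ..., n_r, the sequence f_1^{n_1}, ..., f_r^{n_r} is also a regular sequence on M. In particular, for a prime p, if f_1, ..., f_r is a regular sequence on a commutative ring A, then f_1^p, ..., f_r^p is a regular sequence on A. -/
open RingTheory.Sequence

section Aux

open scoped Pointwise

variable {R : Type*} [CommRing R]

private lemma mem_rsmul_top {M : Type*} [AddCommGroup M] [Module R M] (r : R) (x : M) :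
    x ∈ r • (⊤ : Submodule R M) ↔ ∃ m, r • m = x := by
  rw [← SetLike.mem_coe, Submodule.coe_pointwise_smul, Set.mem_smul_set]
  simp

/-- Weak regularity transfers along short exact sequences. -/
private lemma isWeaklyRegular_of_ses (rs : List R) :
    ∀ {M₁ M M₂ : Type*} [AddCommGroup M₁] [AddCommGroup M] [AddCommGroup M₂]
    [Module R M₁] [Module R M] [Module R M₂]
    (i : M₁ →ₗ[R] M) (g : M →ₗ[R] M₂),
    Function.Injective i → Function.Surjective g →
    (∀ m, g m = 0 ↔ ∃ y, i y = m) →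
    IsWeaklyRegular M₁ rs → IsWeaklyRegular M₂ rs →
    IsWeaklyRegular M rs := by
  induction rs with
  | nil => intros; exact IsWeaklyRegular.nil _ _
  | cons r rs ih =>
    intro M₁ M M₂ _ _ _ _ _ _ i g hi hg hexact h₁ h₂
    rw [isWeaklyRegular_cons_iff] at h₁ h₂ ⊢
    obtain ⟨h₁r, h₁rs⟩ := h₁
    obtain ⟨h₂r, h₂rs⟩ := h₂
    have hregM : IsSMulRegular M r := by
      intro x y hxy
      have hz : r • (x - y) = 0 := by
        simp only [smul_sub]
        rw [show r • x = r • y from hxy, sub_self]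
      have hgz : g (x - y) = 0 := by
        apply h₂r
        show r • g (x - y) = r • (0 : M₂)
        rw [← map_smul, hz, map_zero, smul_zero]
      obtain ⟨w, hw⟩ := (hexact _).mp hgz
      have hw0 : w = 0 := by
        apply h₁r
        show r • w = r • (0 : M₁)
        apply hi
        rw [map_smul, hw, hz, smul_zero, map_zero]
      rw [hw0, map_zero] at hw
      exact sub_eq_zero.mp hw.symm
    refine ⟨hregM, ?_⟩
    refine ih (QuotSMulTop.map r i) (QuotSMulTop.map r g) ?_ ?_ ?_ h₁rs h₂rs
    · -- injectivity of the induced map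
      rw [← LinearMap.ker_eq_bot, eq_bot_iff]
      rintro q hq
      obtain ⟨x, rfl⟩ := Submodule.mkQ_surjective _ q
      simp only [LinearMap.mem_ker, Submodule.mkQ_apply, QuotSMulTop.map_apply_mk,
        Submodule.Quotient.mk_eq_zero] at hq
      obtain ⟨m, hm⟩ := (mem_rsmul_top r (i x)).mp hq
      have hgi : g (i x) = 0 := (hexact (i x)).mpr ⟨x, rfl⟩
      have hgm : g m = 0 := by
        apply h₂r
        show r • g m = r • (0 : M₂)
        rw [smul_zero, ← map_smul, hm, hgi]
      obtain ⟨y, hy⟩ := (hexact m).mp hgm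
      have hx : x = r • y := by
        apply hi
        rw [map_smul, hy, hm]
      simp only [Submodule.mem_bot, Submodule.mkQ_apply, Submodule.Quotient.mk_eq_zero, hx]
      exact (mem_rsmul_top r _).mpr ⟨y, rfl⟩
    · -- surjectivity of the induced map
      rintro q
      obtain ⟨z, rfl⟩ := Submodule.mkQ_surjective _ q
      obtain ⟨m, rfl⟩ := hg z
      exact ⟨Submodule.Quotient.mk m, rfl⟩
    · -- exactness in the middle
      intro q
      obtain ⟨m, rfl⟩ := Submodule.mkQ_surjective _ q
      constructor
      · intro hq
        simp only [Submodule.mkQ_apply, QuotSMulTop.map_apply_mk,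
          Submodule.Quotient.mk_eq_zero] at hq
        obtain ⟨z, hz⟩ := (mem_rsmul_top r (g m)).mp hq
        obtain ⟨m', rfl⟩ := hg z
        have : g (m - r • m') = 0 := by
          rw [map_sub, map_smul, hz, sub_self]
        obtain ⟨y, hy⟩ := (hexact _).mp this
        refine ⟨Submodule.Quotient.mk y, ?_⟩
        simp only [Submodule.mkQ_apply, QuotSMulTop.map_apply_mk]
        rw [Submodule.Quotient.eq]
        rw [hy]
        exact (mem_rsmul_top r _).mpr ⟨-m', by simp [smul_sub, sub_sub_cancel_left]⟩
      · rintro ⟨q', hq'⟩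
        obtain ⟨y, rfl⟩ := Submodule.mkQ_surjective _ q'
        simp only [Submodule.mkQ_apply, QuotSMulTop.map_apply_mk] at hq' ⊢
        rw [Submodule.Quotient.eq] at hq'
        obtain ⟨w, hw⟩ := (mem_rsmul_top r _).mp hq'
        rw [Submodule.Quotient.mk_eq_zero]
        refine (mem_rsmul_top r _).mpr ⟨-g w, ?_⟩
        have hgiy : g (i y) = 0 := (hexact (i y)).mpr ⟨y, rfl⟩
        have hm : m = i y - r • w := by rw [hw]; abel
        rw [hm, map_sub, map_smul, hgiy, zero_sub, smul_neg]

/-- If `r` is regular on `M` and `rs` is weakly regular on `M/rM`, then `rs` is weakly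
regular on `M/r^nM` for any `n ≥ 1`. -/
private lemma isWeaklyRegular_quotSMulTop_pow {M : Type*} [AddCommGroup M] [Module R M]
    {r : R} (hr : IsSMulRegular M r) (rs : List R)
    (h : IsWeaklyRegular (QuotSMulTop r M) rs) :
    ∀ n : ℕ, 0 < n → IsWeaklyRegular (QuotSMulTop (r ^ n) M) rs := by
  intro n hn
  induction n with
  | zero => omega
  | succ n ihn =>
    rcases Nat.eq_zero_or_pos n with rfl | hn'
    · have e : QuotSMulTop (r ^ (0 + 1)) M ≃ₗ[R] QuotSMulTop r M :=
        Submodule.quotEquivOfEq _ _ (by rw [zero_add, pow_one])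
      exact (e.isWeaklyRegular_congr rs).mpr h
    · -- short exact sequence  M/r^n M --(·r)--> M/r^{n+1} M --> M/rM --> 0
      have hrn := ihn hn'
      have hle₁ : (r ^ n • ⊤ : Submodule R M) ≤
          Submodule.comap (LinearMap.lsmul R M r) (r ^ (n + 1) • ⊤ : Submodule R M) := by
        intro x hx
        obtain ⟨m, rfl⟩ := (mem_rsmul_top _ x).mp hx
        refine (mem_rsmul_top _ _).mpr ⟨m, ?_⟩
        simp [pow_succ, smul_smul, mul_comm]
      have hle₂ : (r ^ (n + 1) • ⊤ : Submodule R M) ≤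
          Submodule.comap (LinearMap.id : M →ₗ[R] M) (r • ⊤ : Submodule R M) := by
        intro x hx
        obtain ⟨m, rfl⟩ := (mem_rsmul_top _ x).mp hx
        refine (mem_rsmul_top _ _).mpr ⟨r ^ n • m, ?_⟩
        simp [pow_succ, smul_smul, mul_comm]
      set i : QuotSMulTop (r ^ n) M →ₗ[R] QuotSMulTop (r ^ (n + 1)) M :=
        Submodule.mapQ _ _ (LinearMap.lsmul R M r) hle₁ with hi_def
      set g : QuotSMulTop (r ^ (n + 1)) M →ₗ[R] QuotSMulTop r M :=
        Submodule.mapQ _ _ LinearMap.id hle₂ with hg_def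
      refine isWeaklyRegular_of_ses rs i g ?_ ?_ ?_ hrn h
      · rw [← LinearMap.ker_eq_bot, eq_bot_iff]
        rintro q hq
        obtain ⟨x, rfl⟩ := Submodule.mkQ_surjective _ q
        simp only [LinearMap.mem_ker, Submodule.mkQ_apply, hi_def, Submodule.mapQ_apply,
          LinearMap.lsmul_apply, Submodule.Quotient.mk_eq_zero] at hq
        obtain ⟨m, hm⟩ := (mem_rsmul_top _ _).mp hq
        have : r • (r ^ n • m) = r • x := by
          rw [smul_smul, ← pow_succ', hm]
        have hx : x = r ^ n • m := (hr this).symm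
        simp only [Submodule.mem_bot, Submodule.mkQ_apply, Submodule.Quotient.mk_eq_zero, hx]
        exact (mem_rsmul_top _ _).mpr ⟨m, rfl⟩
      · rintro q
        obtain ⟨x, rfl⟩ := Submodule.mkQ_surjective _ q
        exact ⟨Submodule.Quotient.mk x, rfl⟩
      · intro q
        obtain ⟨m, rfl⟩ := Submodule.mkQ_surjective _ q
        simp only [Submodule.mkQ_apply, hi_def, hg_def, Submodule.mapQ_apply,
          LinearMap.id_coe, id_eq, LinearMap.lsmul_apply, Submodule.Quotient.mk_eq_zero]
        constructor
        · intro hm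
          obtain ⟨y, hy⟩ := (mem_rsmul_top _ _).mp hm
          refine ⟨Submodule.Quotient.mk y, ?_⟩
          rw [Submodule.mapQ_apply, LinearMap.lsmul_apply, Submodule.Quotient.eq, hy, sub_self]
          exact Submodule.zero_mem _
        · rintro ⟨q', hq'⟩
          obtain ⟨y, rfl⟩ := Submodule.mkQ_surjective _ q'
          simp only [Submodule.mkQ_apply, Submodule.mapQ_apply, LinearMap.lsmul_apply] at hq'
          rw [Submodule.Quotient.eq] at hq'
          obtain ⟨w, hw⟩ := (mem_rsmul_top _ _).mp hq'
          have hm : m = r • y - r ^ (n + 1) • w := by rw [hw]; abel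
          refine (mem_rsmul_top _ _).mpr ⟨y - r ^ n • w, ?_⟩
          rw [hm]
          simp [smul_sub, smul_smul, pow_succ, mul_comm]

private lemma isWeaklyRegular_zipWith_pow (rs : List R) :
    ∀ (ns : List ℕ), (∀ k ∈ ns, 0 < k) →
    ∀ {M : Type*} [AddCommGroup M] [Module R M], IsWeaklyRegular M rs →
    IsWeaklyRegular M (List.zipWith (· ^ ·) rs ns) := by
  induction rs with
  | nil =>
    intro ns _ M _ _ _
    rw [List.zipWith_nil_left]
    exact IsWeaklyRegular.nil R M
  | cons a tl ih =>
    intro ns hpos M _ _ h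
    cases ns with
    | nil =>
      rw [List.zipWith_nil_right]
      exact IsWeaklyRegular.nil R M
    | cons n ns' =>
      rw [isWeaklyRegular_cons_iff] at h
      obtain ⟨ha, hrs⟩ := h
      have hn : 0 < n := hpos n (by simp)
      simp only [List.zipWith_cons_cons]
      rw [isWeaklyRegular_cons_iff]
      refine ⟨ha.pow n, ?_⟩
      have := ih ns' (fun k hk => hpos k (by simp [hk])) hrs
      exact isWeaklyRegular_quotSMulTop_pow ha _ this n hn

end Aux

/-- If `f 0, …, f (r-1)` is a regular sequence on an `R`-module `M`, then for any positive
integers `n 0, …, n (r-1)` the sequence of powers `f 0 ^ n 0, …, f (r-1) ^ n (r-1)` is also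
a regular sequence on `M`.  (In particular, for a prime `p`, if `f 0, …, f (r-1)` is a regular
sequence on a commutative ring `A`, then so is `f 0 ^ p, …, f (r-1) ^ p`.) -/
theorem isRegular_pow_of_isRegular (R : Type*) [CommRing R] (M : Type*) [AddCommGroup M]
    [Module R M] (r : ℕ) (f : Fin r → R) (n : Fin r → ℕ) (hn : ∀ i, 0 < n i)
    (h : IsRegular M (List.ofFn f)) :
    IsRegular M (List.ofFn fun i => f i ^ n i) := by
  have hzip : (List.ofFn fun i => f i ^ n i) =
      List.zipWith (· ^ ·) (List.ofFn f) (List.ofFn n) := by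
    apply List.ext_getElem
    · simp
    · intro k h1 h2
      simp
  constructor
  · rw [hzip]
    exact isWeaklyRegular_zipWith_pow (List.ofFn f) (List.ofFn n)
      (by simp only [List.mem_ofFn]; rintro k ⟨i, rfl⟩; exact hn i) h.toIsWeaklyRegular
  · -- nontriviality
    intro htop
    apply h.top_ne_smul
    have hle : Ideal.ofList (List.ofFn fun i => f i ^ n i) ≤ Ideal.ofList (List.ofFn f) := by
      rw [Ideal.span_le]
      rintro x hx
      simp only [Set.mem_setOf_eq, List.mem_ofFn] at hx
      obtain ⟨i, rfl⟩ := hx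
      have hfi : f i ∈ Ideal.ofList (List.ofFn f) :=
        Ideal.subset_span (by simp [List.mem_ofFn])
      exact Ideal.pow_mem_of_mem _ hfi _ (hn i)
    exact le_antisymm (le_trans (le_of_eq htop) (Submodule.smul_mono_left hle)) le_top
end

section
/- Let n ≥ 1, let A be a flat Z/p^n-algebra, and let f ∈ A be a nonzerodivisor. Then the quotient ring A/(f) is a flat Z/p^n-module. -/
open LinearMap TensorProduct
variable {p n : ℕ}

lemma zmod_mul_pow_eq_zero_iff (hp : p.Prime) {k : ℕ} (hk : k ≤ n) (c : ZMod (p^n)) :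
    c * (p : ZMod (p^n))^k = 0 ↔ (p : ZMod (p^n))^(n-k) ∣ c := by
  haveI : NeZero (p^n) := ⟨pow_ne_zero _ hp.pos.ne'⟩
  constructor
  · intro h
    have h1 : ((c.val * p^k : ℕ) : ZMod (p^n)) = 0 := by
      push_cast [ZMod.natCast_zmod_val]
      exact h
    rw [ZMod.natCast_eq_zero_iff] at h1
    have h2 : p^(n-k) * p^k ∣ c.val * p^k := by
      rwa [← pow_add, Nat.sub_add_cancel hk]
    have h3 : p^(n-k) ∣ c.val :=
      (Nat.mul_dvd_mul_iff_right (pow_pos hp.pos k)).mp h2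
    obtain ⟨t, ht⟩ := h3
    refine ⟨(t : ZMod (p^n)), ?_⟩
    have : c = ((c.val : ℕ) : ZMod (p^n)) := (ZMod.natCast_zmod_val c).symm
    rw [this, ht]
    push_cast
    ring
  · rintro ⟨t, rfl⟩
    have : (p : ZMod (p^n))^(n-k) * (p : ZMod (p^n))^k = 0 := by
      rw [← pow_add, Nat.sub_add_cancel hk]
      have : ((p^n : ℕ) : ZMod (p^n)) = 0 := ZMod.natCast_self _
      push_cast at this
      exact this
    calc (p : ZMod (p^n))^(n-k) * t * (p : ZMod (p^n))^k
        = ((p : ZMod (p^n))^(n-k) * (p : ZMod (p^n))^k) * t := by ring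
      _ = 0 := by rw [this, zero_mul]

lemma smul_eq_zero_imp (hp : p.Prime) {M : Type*} [AddCommGroup M] [Module (ZMod (p^n)) M]
    [Module.Flat (ZMod (p^n)) M] {k : ℕ} (hk : k ≤ n) (x : M)
    (hx : (p : ZMod (p^n))^k • x = 0) : ∃ y, x = (p : ZMod (p^n))^(n-k) • y := by
  set R := ZMod (p^n)
  set I : Ideal R := Ideal.span {(p:R)^k} with hI
  set J : Ideal R := Ideal.span {(p:R)^(n-k)} with hJ
  have hmem : (p:R)^k ∈ I := Ideal.mem_span_singleton_self _
  set ψ : R →ₗ[R] I := LinearMap.toSpanSingleton R I ⟨_, hmem⟩ with hψ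
  have hψapp : ∀ c : R, (ψ c : R) = c * (p:R)^k := fun c => rfl
  have hsurj : Function.Surjective ψ := by
    rintro ⟨s, hs⟩
    rw [hI, Ideal.mem_span_singleton] at hs
    obtain ⟨c, rfl⟩ := hs
    exact ⟨c, Subtype.ext (by rw [hψapp]; ring)⟩
  have hker : LinearMap.ker ψ = J := by
    ext c
    rw [LinearMap.mem_ker, hJ, Ideal.mem_span_singleton,
      ← zmod_mul_pow_eq_zero_iff hp hk c]
    constructor
    · intro h; exact Subtype.ext_iff.mp h
    · intro h; exact Subtype.ext h
  set e : (R ⧸ J) →ₗ[R] I := Submodule.liftQ J ψ (le_of_eq hker.symm) with he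
  have heapp : ∀ c : R, e (Submodule.Quotient.mk c) = ψ c := fun c => rfl
  have hebij : Function.Bijective e := by
    constructor
    · rw [← LinearMap.ker_eq_bot, Submodule.ker_liftQ_eq_bot' J ψ hker.symm]
    · intro s
      obtain ⟨c, hc⟩ := hsurj s
      exact ⟨Submodule.Quotient.mk c, hc⟩
  set E : (R ⧸ J) ≃ₗ[R] I := LinearEquiv.ofBijective e hebij with hE
  have hE1 : E.symm ⟨(p:R)^k, hmem⟩ = Submodule.Quotient.mk 1 := by
    rw [LinearEquiv.symm_apply_eq]
    refine (Subtype.ext ?_).symm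
    show ((E (Submodule.Quotient.mk 1) : I) : R) = (p:R)^k
    rw [hE]
    show ((e (Submodule.Quotient.mk 1) : I) : R) = (p:R)^k
    rw [heapp, hψapp, one_mul]
  set t : I ⊗[R] M := (⟨(p:R)^k, hmem⟩ : I) ⊗ₜ[R] x with ht
  have ht0 : t = 0 := by
    have hinj := (Module.Flat.iff_rTensor_injective' (R := R) (M := M)).mp inferInstance I
    apply hinj
    rw [map_zero]
    show ((p:R)^k : R) ⊗ₜ[R] x = 0
    apply (TensorProduct.lid R M).injective
    rw [TensorProduct.lid_tmul, hx, map_zero]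
  have hFt : (quotTensorEquivQuotSMul M J) ((rTensor M (E.symm : (I →ₗ[R] R ⧸ J))) t) = 0 := by
    rw [ht0, LinearMap.map_zero, LinearEquiv.map_zero]
  rw [ht, rTensor_tmul] at hFt
  have : ((E.symm : I →ₗ[R] R ⧸ J) ⟨(p:R)^k, hmem⟩) = Submodule.Quotient.mk 1 := hE1
  rw [this] at hFt
  rw [show (Submodule.Quotient.mk (1:R) : R ⧸ J) = Ideal.Quotient.mk J 1 from rfl,
    quotTensorEquivQuotSMul_mk_tmul, one_smul, Submodule.Quotient.mk_eq_zero] at hFt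
  refine Submodule.smul_induction_on hFt ?_ ?_
  · intro r hr m _
    rw [hJ, Ideal.mem_span_singleton] at hr
    obtain ⟨c, rfl⟩ := hr
    exact ⟨c • m, by rw [mul_smul]⟩
  · rintro a b ⟨ya, rfl⟩ ⟨yb, rfl⟩
    exact ⟨ya + yb, by rw [smul_add]⟩
variable {p n : ℕ}

lemma span_singleton_tmul_surj {R M : Type*} [CommRing R] [AddCommGroup M] [Module R M]
    (a : R) (t : (Ideal.span {a} : Ideal R) ⊗[R] M) :
    ∃ m : M, t = (⟨a, Ideal.mem_span_singleton_self a⟩ : Ideal.span {a}) ⊗ₜ[R] m := by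
  induction t with
  | zero => exact ⟨0, (tmul_zero _ _).symm⟩
  | tmul s m =>
    obtain ⟨c, hc⟩ := Ideal.mem_span_singleton.mp s.2
    refine ⟨c • m, ?_⟩
    have h1 : s = c • (⟨a, Ideal.mem_span_singleton_self a⟩ : Ideal.span {a}) :=
      Subtype.ext (by rw [hc]; show a * c = c • a; rw [smul_eq_mul, mul_comm])
    rw [h1, smul_tmul]
  | add x y hx hy =>
    obtain ⟨mx, rfl⟩ := hx
    obtain ⟨my, rfl⟩ := hy
    exact ⟨mx + my, by rw [tmul_add]⟩

lemma zmod_ideal_eq (hp : p.Prime) (I : Ideal (ZMod (p^n))) :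
    ∃ k ≤ n, I = Ideal.span {(p : ZMod (p^n))^k} := by
  haveI : NeZero (p^n) := ⟨pow_ne_zero _ hp.pos.ne'⟩
  haveI : IsPrincipalIdealRing (ZMod (p^n)) :=
    IsPrincipalIdealRing.of_surjective (Int.castRingHom (ZMod (p^n))) ZMod.intCast_surjective
  obtain ⟨a, ha⟩ := (IsPrincipalIdealRing.principal I).principal
  set d : ℕ := Nat.gcd a.val (p^n) with hd
  obtain ⟨k, hk, hdk⟩ := (Nat.dvd_prime_pow hp).mp (Nat.gcd_dvd_right a.val (p^n))
  refine ⟨k, hk, ?_⟩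
  have hpk : ((p : ZMod (p^n)))^k = ((d : ℕ) : ZMod (p^n)) := by rw [hd, hdk]; push_cast; ring
  rw [ha, hpk]
  show Ideal.span {a} = Ideal.span {((d:ℕ) : ZMod (p^n))}
  apply le_antisymm
  · rw [Ideal.span_le, Set.singleton_subset_iff, SetLike.mem_coe, Ideal.mem_span_singleton]
    obtain ⟨t, ht⟩ := Nat.gcd_dvd_left a.val (p^n)
    refine ⟨(t : ZMod (p^n)), ?_⟩
    have : a = ((a.val : ℕ) : ZMod (p^n)) := (ZMod.natCast_zmod_val a).symm
    rw [this, ht]; push_cast; ring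
  · rw [Ideal.span_le, Set.singleton_subset_iff, SetLike.mem_coe, Ideal.mem_span_singleton]
    refine ⟨((Nat.gcdA a.val (p^n) : ℤ) : ZMod (p^n)), ?_⟩
    have h0 : ((p : ZMod (p^n)))^n = 0 := by
      have := ZMod.natCast_self (p^n); push_cast at this; exact this
    have hb := congrArg (fun z : ℤ => ((z : ℤ) : ZMod (p^n))) (Nat.gcd_eq_gcd_ab a.val (p^n))
    push_cast at hb
    rw [ZMod.natCast_zmod_val, h0, zero_mul, add_zero] at hb
    rw [hd, hb]

lemma flat_of_smul_cond {p n : ℕ} (hp : p.Prime) {M : Type*} [AddCommGroup M]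
    [Module (ZMod (p^n)) M]
    (h : ∀ k ≤ n, ∀ x : M, (p : ZMod (p^n))^k • x = 0 →
      ∃ y, x = (p : ZMod (p^n))^(n-k) • y) :
    Module.Flat (ZMod (p^n)) M := by
  set R := ZMod (p^n)
  rw [Module.Flat.iff_rTensor_injective' (R := R) (M := M)]
  intro I
  obtain ⟨k, hk, rfl⟩ := zmod_ideal_eq hp I
  rw [injective_iff_map_eq_zero]
  intro t ht
  obtain ⟨m, rfl⟩ := span_singleton_tmul_surj ((p:R)^k) t
  rw [rTensor_tmul] at ht
  have hm : (p:R)^k • m = 0 := by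
    have := congrArg (TensorProduct.lid R M) ht
    rwa [TensorProduct.lid_tmul, map_zero] at this
  obtain ⟨y, rfl⟩ := h k hk m hm
  have h1 : ((p:R)^(n-k) • (⟨(p:R)^k, Ideal.mem_span_singleton_self _⟩ :
      Ideal.span {(p:R)^k})) = 0 := by
    refine Subtype.ext ?_
    show (p:R)^(n-k) • (p:R)^k = 0
    rw [smul_eq_mul, ← pow_add, Nat.sub_add_cancel hk]
    have : ((p^n : ℕ) : R) = 0 := ZMod.natCast_self _
    push_cast at this
    exact this
  rw [← smul_tmul, h1, zero_tmul]

/-- Let `n ≥ 1`, let `A` be a flat `ℤ/p^n`-algebra and `f ∈ A` a nonzerodivisor.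
Then `A/(f)` is a flat `ℤ/p^n`-module. -/
theorem quotient_regular_element_flat (p n : ℕ) (hp : p.Prime) (hn : 1 ≤ n)
    (A : Type*) [CommRing A] [Algebra (ZMod (p ^ n)) A] [Module.Flat (ZMod (p ^ n)) A]
    (f : A) (hf : f ∈ nonZeroDivisors A) :
    Module.Flat (ZMod (p ^ n)) (A ⧸ Ideal.span {f}) := by
  set R := ZMod (p ^ n)
  apply flat_of_smul_cond hp
  intro k hk m hm
  obtain ⟨x, rfl⟩ := Submodule.Quotient.mk_surjective _ m
  rw [← Submodule.Quotient.mk_smul, Submodule.Quotient.mk_eq_zero,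
    Ideal.mem_span_singleton] at hm
  obtain ⟨b, hb⟩ := hm
  have hpn0 : ((p:R))^n = 0 := by
    have : ((p^n : ℕ) : R) = 0 := ZMod.natCast_self _
    push_cast at this; exact this
  have hfb : f * ((p:R)^(n-k) • b) = 0 := by
    rw [mul_smul_comm, ← hb, smul_smul, ← pow_add, Nat.sub_add_cancel hk, hpn0, zero_smul]
  have hb0 : (p:R)^(n-k) • b = 0 := by
    rw [mem_nonZeroDivisors_iff] at hf
    exact hf.2 _ (by rw [mul_comm]; exact hfb)
  obtain ⟨c, hc⟩ := smul_eq_zero_imp hp (Nat.sub_le n k) b hb0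
  rw [Nat.sub_sub_self hk] at hc
  have hxc : (p:R)^k • (x - f * c) = 0 := by
    rw [smul_sub, hb, hc, mul_smul_comm, sub_self]
  obtain ⟨d, hd⟩ := smul_eq_zero_imp hp hk (x - f * c) hxc
  refine ⟨Submodule.Quotient.mk d, ?_⟩
  rw [← Submodule.Quotient.mk_smul, ← sub_eq_zero, ← Submodule.Quotient.mk_sub,
    Submodule.Quotient.mk_eq_zero, Ideal.mem_span_singleton]
  refine ⟨c, ?_⟩
  rw [← hd]
  ring
end

section
/- Let n ≥ 1, let A be a flat Z/p^n-algebra, and let f ∈ A be a nonzerodivisor. Then the image of f in A/pA is a nonzerodivisor on A/pA; equivalently, the sequence 0 → A/pA →(·f) A/pA → (A/fA)/p(A/fA) → 0 is exact. -/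
set_option maxRecDepth 8000
set_option maxHeartbeats 1000000

section Aux

variable (p n : ℕ)

/-- Exactness of `(ZMod (p ^ n)) --p--> (ZMod (p ^ n)) --p^(n-1)--> (ZMod (p ^ n))` for `(ZMod (p ^ n)) = ZMod (p^n)`. -/
lemma zmod_pow_exact (hp : p.Prime) (hn : 1 ≤ n) :
    Function.Exact (LinearMap.lsmul ((ZMod (p ^ n))) ((ZMod (p ^ n))) (p : (ZMod (p ^ n))))
      (LinearMap.lsmul ((ZMod (p ^ n))) ((ZMod (p ^ n))) ((p : (ZMod (p ^ n))) ^ (n - 1))) := by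
  haveI : NeZero (p ^ n) := ⟨pow_ne_zero n hp.pos.ne'⟩
  intro x
  obtain ⟨k, rfl⟩ := ZMod.natCast_zmod_surjective x
  constructor
  · intro h
    have h' : ((p ^ (n - 1) * k : ℕ) : (ZMod (p ^ n))) = 0 := by
      push_cast
      simpa using h
    rw [ZMod.natCast_eq_zero_iff] at h'
    have hpn : p ^ n = p ^ (n - 1) * p := by
      rw [← pow_succ, Nat.sub_add_cancel hn]
    rw [hpn] at h'
    have hdvd : p ∣ k := (mul_dvd_mul_iff_left (pow_ne_zero (n - 1) hp.pos.ne')).mp h'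
    obtain ⟨m, rfl⟩ := hdvd
    refine ⟨(m : (ZMod (p ^ n))), ?_⟩
    simp only [LinearMap.lsmul_apply, smul_eq_mul]
    push_cast
    ring
  · rintro ⟨y, hy⟩
    rw [← hy]
    have hpn : ((p : (ZMod (p ^ n))) ^ (n - 1)) * (p : (ZMod (p ^ n))) = 0 := by
      rw [← pow_succ, Nat.sub_add_cancel hn]
      have : ((p ^ n : ℕ) : (ZMod (p ^ n))) = 0 := ZMod.natCast_self _
      push_cast at this
      exact this
    simp only [LinearMap.lsmul_apply, smul_eq_mul]
    rw [← mul_assoc, hpn, zero_mul]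

/-- In a flat algebra over `ZMod (p^n)`, any element killed by `p^(n-1)` is divisible by `p`. -/
lemma flat_key (hp : p.Prime) (hn : 1 ≤ n)
    (A : Type*) [CommRing A] [Algebra ((ZMod (p ^ n))) A] [Module.Flat ((ZMod (p ^ n))) A]
    (a : A) (ha : ((p : (ZMod (p ^ n))) ^ (n - 1)) • a = 0) :
    ∃ b : A, a = (p : (ZMod (p ^ n))) • b := by
  -- tensor the exact sequence with A
  have hex := Module.Flat.lTensor_exact A (zmod_pow_exact p n hp hn)
  -- the commutation of `lTensor` of `lsmul c` with `rid`
  have comm : ∀ c : (ZMod (p ^ n)), (TensorProduct.rid (ZMod (p ^ n)) A).toLinearMap ∘ₗ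
      (LinearMap.lsmul (ZMod (p ^ n)) (ZMod (p ^ n)) c).lTensor A =
      LinearMap.lsmul (ZMod (p ^ n)) A c ∘ₗ (TensorProduct.rid (ZMod (p ^ n)) A).toLinearMap := by
    intro c
    apply TensorProduct.ext'
    intro x r
    simp only [LinearMap.coe_comp, Function.comp_apply, LinearMap.lTensor_tmul,
      LinearMap.lsmul_apply, LinearEquiv.coe_coe, TensorProduct.rid_tmul, smul_eq_mul, mul_smul]
  set e := TensorProduct.rid (ZMod (p ^ n)) A
  have h0 : ((LinearMap.lsmul (ZMod (p ^ n)) (ZMod (p ^ n)) ((p : (ZMod (p ^ n))) ^ (n - 1))).lTensor A) (e.symm a) = 0 := by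
    apply e.injective
    rw [map_zero]
    have := congrArg (fun g => g (e.symm a)) (comm ((p : (ZMod (p ^ n))) ^ (n - 1)))
    simp only [LinearMap.comp_apply, LinearEquiv.coe_coe] at this
    rw [this]
    simpa using ha
  obtain ⟨t, ht⟩ := (hex (e.symm a)).mp h0
  refine ⟨e t, ?_⟩
  have := congrArg (fun g => g t) (comm (p : (ZMod (p ^ n))))
  simp only [LinearMap.comp_apply, LinearEquiv.coe_coe] at this
  have : e (((LinearMap.lsmul (ZMod (p ^ n)) (ZMod (p ^ n)) (p : (ZMod (p ^ n)))).lTensor A) t) = (p : (ZMod (p ^ n))) • e t := by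
    rw [this]; simp
  rw [ht] at this
  simpa using this

end Aux

/-- Let `n ≥ 1`, let `A` be a flat `ℤ/p^n`-algebra and `f ∈ A` a nonzerodivisor.
Then the image of `f` in `A/pA` is a nonzerodivisor on `A/pA`. -/
theorem regular_element_mod_p (p n : ℕ) (hp : p.Prime) (hn : 1 ≤ n)
    (A : Type*) [CommRing A] [Algebra (ZMod (p ^ n)) A] [Module.Flat (ZMod (p ^ n)) A]
    (f : A) (hf : f ∈ nonZeroDivisors A) :
    Ideal.Quotient.mk (Ideal.span {(p : A)}) f ∈
      nonZeroDivisors (A ⧸ Ideal.span {(p : A)}) := by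
  have hpA : (p : A) = algebraMap (ZMod (p ^ n)) A (p : (ZMod (p ^ n))) := by simp [map_natCast]
  rw [mem_nonZeroDivisors_iff_right]
  intro y hy
  obtain ⟨a, rfl⟩ := Ideal.Quotient.mk_surjective y
  rw [← map_mul, Ideal.Quotient.eq_zero_iff_mem] at hy
  obtain ⟨b, hb⟩ := Ideal.mem_span_singleton.mp hy
  -- p^(n-1) • (a * f) = 0
  have h1 : ((p : (ZMod (p ^ n))) ^ (n - 1)) • (a * f) = 0 := by
    rw [hb, hpA, Algebra.smul_def, ← mul_assoc, ← map_mul, ← pow_succ,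
      Nat.sub_add_cancel hn]
    have hz : ((p : (ZMod (p ^ n)))) ^ n = 0 := by
      have : ((p ^ n : ℕ) : (ZMod (p ^ n))) = 0 := ZMod.natCast_self _
      push_cast at this
      exact this
    rw [hz, map_zero, zero_mul]
  have h2 : (((p : (ZMod (p ^ n))) ^ (n - 1)) • a) * f = 0 := by
    rw [smul_mul_assoc, h1]
  have h3 : ((p : (ZMod (p ^ n))) ^ (n - 1)) • a = 0 := (mem_nonZeroDivisors_iff_right.mp hf) _ h2
  obtain ⟨c, hc⟩ := flat_key p n hp hn A a h3
  rw [Ideal.Quotient.eq_zero_iff_mem, Ideal.mem_span_singleton]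
  exact ⟨c, by rw [hc, hpA, Algebra.smul_def]⟩
end

section
/- Let p be a prime and n ≥ 1. Let π: M → N be a surjective homomorphism of commutative monoids (written multiplicatively) such that: (1) whenever π(m) = π(m'), one has m^{p^n} = (m')^{p^n}; and (2) the p-th power map x ↦ x^p on N is bijective. Then there exists a unique monoid homomorphism s: N → M with π ∘ s = id_N. -/
/-- Let `p` be a prime and `n ≥ 1`.  Let `π : M → N` be a surjective homomorphism of
commutative monoids such that (1) whenever `π m = π m'` one has `m ^ p^n = m' ^ p^n`, and
(2) the `p`-th power map on `N` is bijective.  Then `π` admits a unique monoid-homomorphism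
section `s : N → M`. -/
theorem exists_unique_monoidHom_section (p n : ℕ) (hp : p.Prime) (hn : 1 ≤ n)
    (M N : Type*) [CommMonoid M] [CommMonoid N] (π : M →* N)
    (hsurj : Function.Surjective π)
    (hker : ∀ m m' : M, π m = π m' → m ^ (p ^ n) = m' ^ (p ^ n))
    (hdiv : Function.Bijective (fun x : N => x ^ p)) :
    ∃! s : N →* M, π.comp s = MonoidHom.id N := by
  have hq : Function.Bijective (fun x : N => x ^ (p ^ n)) := by
    clear hn hker
    induction n with
    | zero => simp; exact Function.bijective_id
    | succ k ih =>
      have h : (fun x : N => x ^ p ^ (k + 1)) =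
          (fun x : N => x ^ p) ∘ (fun x : N => x ^ p ^ k) := by
        funext x; simp [pow_succ, pow_mul]
      rw [h]; exact hdiv.comp ih
  set e := Equiv.ofBijective _ hq with he
  have he_apply : ∀ x : N, e x = x ^ (p ^ n) := fun x => rfl
  have hsymm_mul : ∀ x y : N, e.symm (x * y) = e.symm x * e.symm y := by
    intro x y
    apply e.injective
    rw [Equiv.apply_symm_apply, he_apply, mul_pow, ← he_apply, ← he_apply,
      Equiv.apply_symm_apply, Equiv.apply_symm_apply]
  -- choose preimages
  choose lift hlift using hsurj
  have hroot : ∀ x : N, π (lift (e.symm x) ^ (p ^ n)) = x := by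
    intro x
    rw [map_pow, hlift, ← he_apply, Equiv.apply_symm_apply]
  let s : N →* M :=
    { toFun := fun x => lift (e.symm x) ^ (p ^ n)
      map_one' := by
        have h1 : e.symm 1 = 1 := by
          apply e.injective
          rw [Equiv.apply_symm_apply, he_apply, one_pow]
        have : π (lift (e.symm 1)) = π 1 := by rw [hlift, h1, map_one]
        simpa using hker _ _ this
      map_mul' := by
        intro x y
        have : π (lift (e.symm (x * y))) = π (lift (e.symm x) * lift (e.symm y)) := by
          rw [hlift, hsymm_mul, map_mul, hlift, hlift]
        have h2 := hker _ _ this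
        show lift (e.symm (x * y)) ^ p ^ n = _
        rw [h2, mul_pow] }
  refine ⟨s, ?_, ?_⟩
  · ext x
    exact hroot x
  · intro s' hs'
    ext x
    obtain ⟨y, rfl⟩ := hq.surjective x
    have hsx : ∀ (t : N →* M), π.comp t = MonoidHom.id N → π (t y) = y := by
      intro t ht
      exact DFunLike.congr_fun ht y
    have := hker (s' y) (s y) (by
      rw [hsx s' hs', hsx s (by ext z; exact hroot z)])
    simpa [map_pow] using this
end

section
/- Let p be a prime and let R be a commutative ring that is p-adically complete (i.e. R ≅ lim R/p^n R). Then the natural map of multiplicative monoids lim_{x ↦ x^p} R → lim_{Frob} R/pR, sending a sequence (x_0, x_1, x_2, ...) with x_{i+1}^p = x_i to the sequence of its reductions modulo p, is a bijection. -/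
private lemma limPow_iterate {p : ℕ} {R : Type*} [CommRing R]
    (x : {f : ℕ → R // ∀ i, (f (i + 1)) ^ p = f i}) (i k : ℕ) :
    (x.1 (i + k)) ^ p ^ k = x.1 i := by
  induction k with
  | zero => simp
  | succ k ih =>
    rw [pow_succ', pow_mul, show i + (k + 1) = (i + k) + 1 from rfl, x.2 (i + k), ih]

private lemma smod_iff_dvd {p : ℕ} {R : Type*} [CommRing R] (n : ℕ) (a b : R) :
    a ≡ b [SMOD ((Ideal.span {(p : R)}) ^ n • ⊤ : Ideal R)] ↔ (p : R) ^ n ∣ a - b := by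
  rw [SModEq.sub_mem, smul_eq_mul, Ideal.mul_top, Ideal.span_singleton_pow,
    Ideal.mem_span_singleton]

/-- Let `R` be a `p`-adically complete commutative ring.  The natural map
`lim_{x ↦ x^p} R → lim_{Frob} R/pR`, sending a sequence `(x_0, x_1, …)` with
`x_{i+1}^p = x_i` to the sequence of its reductions mod `p`, is a bijection. -/
theorem limPow_to_limFrob_bijective (p : ℕ) (hp : p.Prime) (R : Type*) [CommRing R]
    [IsAdicComplete (Ideal.span {(p : R)}) R] :
    Function.Bijective
      (fun x : {f : ℕ → R // ∀ i, (f (i + 1)) ^ p = f i} =>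
        (⟨fun i => Ideal.Quotient.mk (Ideal.span {(p : R)}) (x.1 i),
          fun i => by rw [← map_pow, x.2 i]⟩ :
          {g : ℕ → R ⧸ Ideal.span {(p : R)} // ∀ i, (g (i + 1)) ^ p = g i})) := by
  set I := Ideal.span {(p : R)} with hI
  constructor
  · rintro x y h
    have hmod : ∀ i, (p : R) ∣ x.1 i - y.1 i := by
      intro i
      have := congrArg (fun z => z.1 i) h
      simp only at this
      rw [← Ideal.mem_span_singleton]
      exact Ideal.Quotient.eq.mp this
    ext i
    have hH : ∀ n : ℕ, (p : R) ^ n ∣ x.1 i - y.1 i := by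
      intro n
      rcases n with _ | k
      · simpa using dvd_refl _
      · have := dvd_sub_pow_of_dvd_sub (hmod (i + k)) k
        rwa [limPow_iterate x i k, limPow_iterate y i k] at this
    have := IsHausdorff.haus (IsAdicComplete.toIsHausdorff (I := I)) (x.1 i - y.1 i)
      (fun n => by
        have := (smod_iff_dvd n (x.1 i - y.1 i) 0).mpr (by simpa using hH n)
        simpa using this)
    exact sub_eq_zero.mp this
  · rintro g
    obtain ⟨y, hy⟩ : ∃ y : ℕ → R, ∀ i, Ideal.Quotient.mk I (y i) = g.1 i := by
      choose y hy using fun i => Ideal.Quotient.mk_surjective (I := I) (g.1 i)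
      exact ⟨y, hy⟩
    have hstep : ∀ i, (p : R) ∣ (y (i + 1)) ^ p - y i := by
      intro i
      rw [← Ideal.mem_span_singleton, ← hI, ← Ideal.Quotient.eq, map_pow, hy, hy]
      exact g.2 i
    set f : ℕ → ℕ → R := fun i n => (y (i + n)) ^ p ^ n with hf
    have hconsec : ∀ i k, (p : R) ^ (k + 1) ∣ f i (k + 1) - f i k := by
      intro i k
      have := dvd_sub_pow_of_dvd_sub (hstep (i + k)) k
      rwa [← pow_mul, ← pow_succ', show i + k + 1 = i + (k + 1) from rfl] at this
    have hchain : ∀ i m n, m ≤ n → (p : R) ^ m ∣ f i n - f i m := by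
      intro i m n hmn
      induction n with
      | zero => simp_all
      | succ k ih =>
        rcases Nat.lt_or_ge m (k + 1) with h' | h'
        · have h1 := ih (Nat.lt_succ_iff.mp h')
          have h2 : (p : R) ^ m ∣ f i (k + 1) - f i k :=
            (pow_dvd_pow _ (by omega)).trans (hconsec i k)
          have := dvd_add h2 h1
          simpa using this
        · have : m = k + 1 := le_antisymm hmn h'
          simp [this]
    have hprec : ∀ i, ∃ L, ∀ n, f i n ≡ L [SMOD (I ^ n • ⊤ : Ideal R)] := by
      intro i
      exact IsPrecomplete.prec (IsAdicComplete.toIsPrecomplete (I := I))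
        (fun {m n} hmn => (smod_iff_dvd m (f i m) (f i n)).mpr
          (dvd_sub_comm.mp (hchain i m n hmn)))
    choose L hL using hprec
    have hLdvd : ∀ i n, (p : R) ^ n ∣ f i n - L i := fun i n =>
      (smod_iff_dvd n (f i n) (L i)).mp (hL i n)
    have hLpow : ∀ i, (L (i + 1)) ^ p = L i := by
      intro i
      have key : ∀ n : ℕ, (p : R) ^ n ∣ (L (i + 1)) ^ p - L i := by
        intro n
        have h1 : (p : R) ^ n ∣ (L (i + 1)) ^ p - (f (i + 1) n) ^ p :=
          ((dvd_sub_comm.mp (hLdvd (i + 1) n))).trans (sub_dvd_pow_sub_pow _ _ p)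
        have h2 : (f (i + 1) n) ^ p = f i (n + 1) := by
          simp only [hf, ← pow_mul, ← pow_succ]
          rw [show i + 1 + n = i + (n + 1) by omega]
        have h3 : (p : R) ^ n ∣ f i (n + 1) - L i :=
          (pow_dvd_pow _ (Nat.le_succ n)).trans (hLdvd i (n + 1))
        have := dvd_add h1 (h2 ▸ h3)
        simpa using this
      have := IsHausdorff.haus (IsAdicComplete.toIsHausdorff (I := I))
        ((L (i + 1)) ^ p - L i)
        (fun n => by
          have := (smod_iff_dvd n ((L (i + 1)) ^ p - L i) 0).mpr (by simpa using key n)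
          simpa using this)
      exact sub_eq_zero.mp this
    refine ⟨⟨L, hLpow⟩, ?_⟩
    apply Subtype.ext
    funext i
    have h1 : (p : R) ∣ L i - y i := by
      have ha := hLdvd i 1
      have hb : (p : R) ∣ f i 1 - y i := by
        simpa [hf] using hstep i
      have := dvd_add (dvd_sub_comm.mp ((pow_one (p : R)) ▸ ha)) hb
      simpa using this
    simp only
    rw [← hy i, Ideal.Quotient.eq, hI, Ideal.mem_span_singleton]
    exact h1
end

section
/- Let Z⟨x⟩ be the divided power polynomial algebra over Z in one variable, i.e. the free Z-module on generators γ_j(x), j ≥ 0, with multiplication γ_i(x)γ_j(x) = C(i+j,i)γ_{i+j}(x). Let J ⊆ Z⟨x⟩ be the (ring-theoretic) ideal generated by x = γ_1(x). Then the quotient Z⟨x⟩/J is isomorphic as an abelian group to Z ⊕ (⊕_{j ≥ 1} Z/j), where the summand Z/j is generated by the class of γ_j(x). -/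
open DirectSum

/-- Let `ℤ⟨x⟩` be the divided power polynomial algebra over `ℤ` — axiomatized here as a
commutative ring `A` with a `ℤ`-basis `γ 0, γ 1, γ 2, …` satisfying `γ 0 = 1` and
`γ i * γ j = C(i+j, i) * γ (i+j)` — and let `J` be the ideal generated by `x = γ 1`.
Then `A/J ≅ ℤ ⊕ (⊕_{j ≥ 1} ℤ/j)` as abelian groups, where the summand `ℤ/j` is generated
by the class of `γ j` (indexing the summand `ℤ/(j+1)` by `j`), and the `ℤ` summand by
`1 = γ 0`. -/
theorem divided_power_algebra_mod_x (A : Type*) [CommRing A] (γ : ℕ → A) (hγ0 : γ 0 = 1)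
    (hmul : ∀ i j : ℕ, γ i * γ j = ((i + j).choose i : A) * γ (i + j))
    (b : Module.Basis ℕ ℤ A) (hb : ∀ j, b j = γ j) :
    ∃ e : (A ⧸ Ideal.span {γ 1}) ≃+ ℤ × (⨁ j : ℕ, ZMod (j + 1)),
      e 1 = (1, 0) ∧
      ∀ j : ℕ, e (Ideal.Quotient.mk (Ideal.span {γ 1}) (γ (j + 1))) =
        (0, DirectSum.of (fun j => ZMod (j + 1)) j 1) := by
  set J : Ideal A := Ideal.span {γ 1} with hJ
  -- target values
  set v : ℕ → ℤ × (⨁ j : ℕ, ZMod (j + 1)) := fun j =>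
    Nat.rec ((1 : ℤ), (0 : ⨁ j : ℕ, ZMod (j + 1)))
    (fun k _ => ((0 : ℤ), DirectSum.of (fun j => ZMod (j + 1)) k 1)) j with hv
  have hv0 : v 0 = (1, 0) := rfl
  have hvs : ∀ k, v (k + 1) = (0, DirectSum.of (fun j => ZMod (j + 1)) k 1) := fun k => rfl
  set l : A →ₗ[ℤ] (ℤ × ⨁ j : ℕ, ZMod (j + 1)) := b.constr ℤ v with hl
  have hlb : ∀ j, l (γ j) = v j := by
    intro j; rw [← hb]; exact b.constr_basis ℤ v j
  -- key multiplication fact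
  have hmul1 : ∀ j : ℕ, γ 1 * γ j = (j + 1) • γ (j + 1) := by
    intro j
    rw [hmul 1 j, Nat.choose_one_right, nsmul_eq_mul]
    norm_num [add_comm 1 j]
  -- l kills γ 1 * c
  have hker : ∀ c : A, l (γ 1 * c) = 0 := by
    have : l.comp (LinearMap.mulLeft ℤ (γ 1)) = 0 := by
      apply b.ext
      intro j
      simp only [LinearMap.comp_apply, LinearMap.mulLeft_apply, LinearMap.zero_apply, hb]
      rw [hmul1 j, map_nsmul, hlb, hvs]
      have : (j + 1) • (1 : ZMod (j + 1)) = 0 := by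
        rw [nsmul_eq_mul, mul_one, ZMod.natCast_self]
      rw [Prod.smul_mk, ← map_nsmul, this, map_zero, smul_zero]
      rfl
    intro c
    have := congrFun (congrArg (fun f => f.toFun) this) c
    simpa using this
  have hkerJ : J.restrictScalars ℤ ≤ LinearMap.ker l := by
    intro y hy
    have : y ∈ J := hy
    rw [hJ, Ideal.mem_span_singleton] at this
    obtain ⟨c, rfl⟩ := this
    exact hker c
  set lQ : (A ⧸ J.restrictScalars ℤ) →ₗ[ℤ] (ℤ × ⨁ j : ℕ, ZMod (j + 1)) := Submodule.liftQ _ l hkerJ with hlQ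
  set f : (A ⧸ J) →+ (ℤ × ⨁ j : ℕ, ZMod (j + 1)) :=
    lQ.toAddMonoidHom.comp ((Submodule.Quotient.restrictScalarsEquiv ℤ J).symm.toAddMonoidHom)
    with hf
  have hfmk : ∀ a : A, f (Ideal.Quotient.mk J a) = l a := by
    intro a
    show lQ ((Submodule.Quotient.restrictScalarsEquiv ℤ J).symm (Submodule.Quotient.mk a)) = l a
    rw [Submodule.Quotient.restrictScalarsEquiv_symm_mk]
    exact Submodule.liftQ_apply _ l a
  -- inverse
  have htor : ∀ j : ℕ, ((j + 1 : ℤ)) • (Ideal.Quotient.mk J (γ (j + 1))) = 0 := by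
    intro j
    have : Ideal.Quotient.mk J (γ 1 * γ j) = 0 := by
      rw [Ideal.Quotient.eq_zero_iff_mem]
      exact Ideal.mul_mem_right _ _ (Ideal.subset_span rfl)
    rw [hmul1 j, map_nsmul] at this
    rw [← this]
    norm_num
  set g : (ℤ × ⨁ j : ℕ, ZMod (j + 1)) →+ (A ⧸ J) :=
    AddMonoidHom.coprod (zmultiplesHom (A ⧸ J) 1)
      (DirectSum.toAddMonoid (fun j =>
        ZMod.lift (j + 1) ⟨zmultiplesHom (A ⧸ J) (Ideal.Quotient.mk J (γ (j + 1))), by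
          simp only [zmultiplesHom_apply]
          exact_mod_cast htor j⟩)) with hg
  have hg1 : g (1, 0) = 1 := by simp [hg, AddMonoidHom.coprod_apply]
  have hgof : ∀ (j : ℕ) (x : ZMod (j + 1)), g (0, DirectSum.of (fun j => ZMod (j + 1)) j x) =
      ZMod.lift (j + 1) ⟨zmultiplesHom (A ⧸ J) (Ideal.Quotient.mk J (γ (j + 1))), by
          simp only [zmultiplesHom_apply]
          exact_mod_cast htor j⟩ x := by
    intro j x
    simp [hg, AddMonoidHom.coprod_apply, DirectSum.toAddMonoid_of]
  -- left inverse on mk a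
  have hgf : ∀ a : A, g (f (Ideal.Quotient.mk J a)) = Ideal.Quotient.mk J a := by
    have : (g.comp (f.comp (Ideal.Quotient.mk J).toAddMonoidHom)).toIntLinearMap =
        ((Ideal.Quotient.mk J).toAddMonoidHom).toIntLinearMap := by
      apply b.ext
      intro j
      show g (f (Ideal.Quotient.mk J (b j))) = Ideal.Quotient.mk J (b j)
      rw [hb, hfmk, hlb]
      cases j with
      | zero => rw [hv0, hg1, hγ0, map_one]
      | succ k =>
          rw [hvs, hgof]
          have : (1 : ZMod (k + 1)) = ((1 : ℤ) : ZMod (k + 1)) := by norm_cast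
          rw [this, ZMod.lift_coe]
          simp
    intro a
    exact congrFun (congrArg (fun h => h.toFun) this) a
  have hleft : ∀ x : A ⧸ J, g (f x) = x := by
    intro x
    obtain ⟨a, rfl⟩ := Ideal.Quotient.mk_surjective x
    exact hgf a
  have hright : ∀ y : ℤ × ⨁ j : ℕ, ZMod (j + 1), f (g y) = y := by
    intro y
    obtain ⟨n, d⟩ := y
    have h1 : f (g (n, 0)) = (n, 0) := by
      have : g (n, 0) = n • (1 : A ⧸ J) := by simp [hg]
      rw [this, map_zsmul]
      have : f 1 = (1, 0) := by
        rw [show (1 : A ⧸ J) = Ideal.Quotient.mk J (γ 0) by rw [hγ0, map_one], hfmk, hlb, hv0]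
      rw [this, Prod.smul_mk, smul_zero]
      norm_num
    have h2 : ∀ dd : ⨁ j : ℕ, ZMod (j + 1), f (g (0, dd)) = (0, dd) := by
      intro dd
      induction dd using DirectSum.induction_on with
      | zero => rw [Prod.mk_zero_zero, map_zero, map_zero]
      | of j x =>
          obtain ⟨m, rfl⟩ := ZMod.intCast_surjective x
          rw [hgof, ZMod.lift_coe]
          simp only [AddMonoidHom.coe_mk, zmultiplesHom_apply]
          rw [map_zsmul, hfmk, hlb, hvs, Prod.smul_mk, smul_zero]
          congr 1
          rw [← map_zsmul]
          congr 1
          rw [zsmul_eq_mul, mul_one]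
      | add x y hx hy =>
          have hxy : ((0 : ℤ), x + y) = ((0:ℤ), x) + ((0:ℤ), y) := by
            rw [Prod.mk_add_mk, add_zero]
          rw [hxy, map_add, map_add, hx, hy]
    have : (n, d) = ((n : ℤ), (0 : ⨁ j : ℕ, ZMod (j + 1))) + ((0:ℤ), d) := by simp [Prod.ext_iff]
    rw [this, map_add, map_add, h1, h2]
  refine ⟨AddEquiv.mk' ⟨⇑f, ⇑g, hleft, hright⟩ f.map_add, ?_, ?_⟩
  · show f 1 = (1, 0)
    rw [show (1 : A ⧸ J) = Ideal.Quotient.mk J (γ 0) by rw [hγ0, map_one], hfmk, hlb, hv0]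
  · intro j
    show f (Ideal.Quotient.mk J (γ (j + 1))) = _
    rw [hfmk, hlb, hvs]
end
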